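/- Let f₃(x) = 2x on [0,1] and let f̂_b be the beta kernel estimator built from n i.i.d. observations with density f₃. Then for p ≥ 1 and all b small enough, ∫₀¹ |E(f̂_b(t)) - f₃(t)|^p dt ≥ C b^p for some constant C > 0 independent of b and n. In particular, E(‖f̂_b - f₃‖_p^p) ≥ C b^p for p ≥ 2. -/

import Mathlib

/-!
For `f₃(x) = 2x` the mean of the beta kernel is a ratio of beta functions,
`E K_{t,b}(X) = 2 B(t/b+2, (1-t)/b+1) / B(t/b+1, (1-t)/b+1) = 2(t+b)/(1+2b)`, so the bias is
exactly `2b(1-2t)/(1+2b)`. As `2b/(1+2b) ≥ b` for `b ≤ 1/2` and `∫₀¹ |1-2t|^p dt = 1/(p+1)`,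
the integrated `p`-th power of the bias is at least `b^p/(p+1)`. For the estimator itself,
Jensen's inequality for the convex function `|·|^p` at each `t`, followed by Fubini, bounds the
integrated expected error from below by the integrated bias; Fubini applies because all kernels
are bounded by `1 / B(1/b+1, 1/b+1)`, the beta function being antitone in both arguments.
-/

open MeasureTheory Set ProbabilityTheory

noncomputable def betaFn (a c : ℝ) : ℝ := ∫ x in (0:ℝ)..1, x ^ (a - 1) * (1 - x) ^ (c - 1)

noncomputable def betaKernel (t b x : ℝ) : ℝ :=
  x ^ (t / b) * (1 - x) ^ ((1 - t) / b) / betaFn (t / b + 1) ((1 - t) / b + 1)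

/-- The density `f₃(x) = 2x` on `[0,1]`, as a measure on `ℝ`. -/
noncomputable def f3Measure : Measure ℝ :=
  volume.withDensity (fun x => ENNReal.ofReal (Set.indicator (Set.Icc 0 1) (fun y => 2 * y) x))

lemma ofReal_betaFn (a c : ℝ) : (betaFn a c : ℂ) = Complex.betaIntegral a c := by
  rw [betaFn, ← intervalIntegral.integral_ofReal]
  refine intervalIntegral.integral_congr fun x hx => ?_
  rw [uIcc_of_le zero_le_one] at hx
  push_cast [Complex.ofReal_cpow hx.1, Complex.ofReal_cpow (sub_nonneg.2 hx.2)]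
  rfl

lemma betaFn_eq_beta {a c : ℝ} (ha : 0 < a) (hc : 0 < c) : betaFn a c = beta a c := by
  rw [beta_eq_betaIntegralReal a c ha hc, ← ofReal_betaFn, Complex.ofReal_re]

lemma beta_add_one_left {a c : ℝ} (ha : 0 < a) (hc : 0 < c) :
    beta (a + 1) c = a / (a + c) * beta a c := by
  have := Real.Gamma_pos_of_pos (add_pos ha hc)
  rw [beta, beta, add_right_comm, Real.Gamma_add_one ha.ne', Real.Gamma_add_one (by positivity)]
  field_simp

lemma betaFn_pos {a c : ℝ} (ha : 0 < a) (hc : 0 < c) : 0 < betaFn a c :=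
  betaFn_eq_beta ha hc ▸ beta_pos ha hc

lemma betaFn_le_betaFn {a a' c c' : ℝ} (ha : 1 ≤ a) (haa' : a ≤ a') (hc : 1 ≤ c) (hcc' : c ≤ c') :
    betaFn a' c' ≤ betaFn a c := by
  refine intervalIntegral.integral_mono_on zero_le_one ?_ ?_ fun x hx => ?_
  · exact (Continuous.intervalIntegrable (by fun_prop (disch := linarith)) _ _)
  · exact (Continuous.intervalIntegrable (by fun_prop (disch := linarith)) _ _)
  · have h1x : 0 ≤ 1 - x := sub_nonneg.2 hx.2
    exact mul_le_mul (Real.rpow_le_rpow_of_exponent_ge' hx.1 hx.2 (by linarith) (by linarith))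
      (Real.rpow_le_rpow_of_exponent_ge' h1x (by linarith [hx.1]) (by linarith) (by linarith))
      (Real.rpow_nonneg h1x _) (Real.rpow_nonneg hx.1 _)

lemma measurable_betaFn : Measurable (Function.uncurry betaFn) := by
  have : Function.uncurry betaFn = fun ac : ℝ × ℝ =>
      ∫ x in Ioc (0:ℝ) 1, x ^ (ac.1 - 1) * (1 - x) ^ (ac.2 - 1) := by
    ext ac; exact intervalIntegral.integral_of_le zero_le_one
  rw [this]
  exact (Measurable.stronglyMeasurable (by fun_prop)).integral_prod_right.measurable

lemma measurable_betaKernel (b : ℝ) : Measurable fun z : ℝ × ℝ => betaKernel z.1 b z.2 := by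
  have hnum : Measurable fun z : ℝ × ℝ => z.2 ^ (z.1 / b) * (1 - z.2) ^ ((1 - z.1) / b) := by
    fun_prop
  have hden : Measurable fun z : ℝ × ℝ => betaFn (z.1 / b + 1) ((1 - z.1) / b + 1) :=
    measurable_betaFn.comp (f := fun z : ℝ × ℝ => (z.1 / b + 1, (1 - z.1) / b + 1)) (by fun_prop)
  exact hnum.div hden

lemma betaKernel_mem_Icc {t b x : ℝ} (ht : t ∈ Icc (0:ℝ) 1) (hb : 0 < b) (hx : x ∈ Icc (0:ℝ) 1) :
    betaKernel t b x ∈ Icc 0 (betaFn (b⁻¹ + 1) (b⁻¹ + 1))⁻¹ := by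
  have hq : 0 ≤ t / b := div_nonneg ht.1 hb.le
  have hr : 0 ≤ (1 - t) / b := div_nonneg (sub_nonneg.2 ht.2) hb.le
  have h1x : 0 ≤ 1 - x := sub_nonneg.2 hx.2
  have hε : 0 < betaFn (b⁻¹ + 1) (b⁻¹ + 1) := betaFn_pos (by positivity) (by positivity)
  have hεB : betaFn (b⁻¹ + 1) (b⁻¹ + 1) ≤ betaFn (t / b + 1) ((1 - t) / b + 1) := by
    refine betaFn_le_betaFn (by linarith) ?_ (by linarith) ?_ <;> rw [div_eq_mul_inv] <;>
      gcongr <;> exact mul_le_of_le_one_left (inv_nonneg.2 hb.le) (by linarith [ht.1, ht.2])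
  have hN : x ^ (t / b) * (1 - x) ^ ((1 - t) / b) ∈ Icc (0:ℝ) 1 :=
    ⟨mul_nonneg (Real.rpow_nonneg hx.1 _) (Real.rpow_nonneg h1x _),
      mul_le_one₀ (Real.rpow_le_one hx.1 hx.2 hq) (Real.rpow_nonneg h1x _)
        (Real.rpow_le_one h1x (by linarith [hx.1]) hr)⟩
  refine ⟨div_nonneg hN.1 (hε.trans_le hεB).le, ?_⟩
  rw [betaKernel, ← one_div]
  exact div_le_div₀ zero_le_one hN.2 hε hεB

lemma integral_mul_betaKernel {t b : ℝ} (ht : t ∈ Icc (0:ℝ) 1) (hb : 0 < b) :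
    ∫ x in (0:ℝ)..1, x * betaKernel t b x = (t + b) / (1 + 2 * b) := by
  set q := t / b
  set r := (1 - t) / b
  have hq : 0 ≤ q := div_nonneg ht.1 hb.le
  have hr : 0 ≤ r := div_nonneg (sub_nonneg.2 ht.2) hb.le
  have hmoment : ∫ x in (0:ℝ)..1, x * betaKernel t b x =
      betaFn (q + 1 + 1) (r + 1) / betaFn (q + 1) (r + 1) := by
    rw [betaFn, ← intervalIntegral.integral_div]
    refine intervalIntegral.integral_congr fun x hx => ?_
    rw [uIcc_of_le zero_le_one] at hx
    simp only [betaKernel, add_sub_cancel_right,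
      Real.rpow_add_one' hx.1 (by positivity : q + 1 ≠ 0)]
    ring
  have hqr : q + r = b⁻¹ := by simp only [q, r]; field_simp; ring
  rw [hmoment, betaFn_eq_beta (by positivity) (by positivity),
    betaFn_eq_beta (by positivity) (by positivity),
    beta_add_one_left (by positivity) (by positivity),
    mul_div_cancel_right₀ _ (beta_pos (by positivity) (by positivity)).ne',
    show q + 1 + (r + 1) = b⁻¹ + 2 by linarith]
  simp only [q]
  field_simp

lemma measurable_f3Density :
    Measurable fun x : ℝ => ENNReal.ofReal ((Icc (0:ℝ) 1).indicator (fun y => 2 * y) x) :=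
  ENNReal.measurable_ofReal.comp ((measurable_const.mul measurable_id).indicator measurableSet_Icc)

lemma integral_f3Measure (g : ℝ → ℝ) : ∫ x, g x ∂f3Measure = ∫ x in (0:ℝ)..1, 2 * x * g x := by
  rw [f3Measure, integral_withDensity_eq_integral_toReal_smul measurable_f3Density
      (Filter.Eventually.of_forall fun _ => ENNReal.ofReal_lt_top),
    intervalIntegral.integral_of_le zero_le_one, ← integral_Icc_eq_integral_Ioc,
    ← integral_indicator measurableSet_Icc]
  refine integral_congr_ae (Filter.Eventually.of_forall fun x => ?_)
  by_cases hx : x ∈ Icc (0:ℝ) 1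
  · simp [hx, hx.1]
  · simp [hx]

lemma ae_mem_Icc_f3Measure : ∀ᵐ x ∂f3Measure, x ∈ Icc (0:ℝ) 1 := by
  rw [f3Measure, ae_withDensity_iff measurable_f3Density]
  exact Filter.Eventually.of_forall fun x hx => by
    by_contra hmem
    simp [hmem] at hx

lemma integral_betaKernel_f3Measure_sub {t b : ℝ} (ht : t ∈ Icc (0:ℝ) 1) (hb : 0 < b) :
    ∫ x, betaKernel t b x ∂f3Measure - 2 * t = 2 * b / (1 + 2 * b) * (1 - 2 * t) := by
  simp_rw [integral_f3Measure, mul_assoc, intervalIntegral.integral_const_mul,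
    integral_mul_betaKernel ht hb]
  field_simp
  ring

lemma integral_abs_one_sub_two_mul_rpow {p : ℝ} (hp : 0 ≤ p) :
    ∫ t in (0:ℝ)..1, |1 - 2 * t| ^ p = 1 / (p + 1) := by
  have hcont : Continuous fun u : ℝ => |u| ^ p := by fun_prop (disch := exact hp)
  have hhalf : ∫ u in (0:ℝ)..1, |u| ^ p = 1 / (p + 1) := by
    have habs : EqOn (fun u : ℝ => |u| ^ p) (fun u => u ^ p) (uIcc 0 1) := fun u hu => by
      rw [uIcc_of_le zero_le_one] at hu
      simp only [abs_of_nonneg hu.1]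
    rw [intervalIntegral.integral_congr habs, integral_rpow (Or.inl (by linarith)),
      Real.one_rpow, Real.zero_rpow (by linarith)]
    ring
  have hsymm : ∫ u in (-1:ℝ)..0, |u| ^ p = ∫ u in (0:ℝ)..1, |u| ^ p := by
    simpa using (intervalIntegral.integral_comp_neg (a := 0) (b := 1) fun u : ℝ => |u| ^ p).symm
  rw [intervalIntegral.integral_comp_sub_mul (fun u => |u| ^ p) two_ne_zero,
    ← intervalIntegral.integral_add_adjacent_intervals (b := 0) (hcont.intervalIntegrable _ _)
      (hcont.intervalIntegrable _ _)]
  norm_num [hsymm, hhalf]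
  ring

lemma le_integral_rpow_abs_bias_betaKernel {p b : ℝ} (hp : 0 ≤ p) (hb : 0 < b) (hb2 : b ≤ 1 / 2) :
    b ^ p / (p + 1) ≤ ∫ t in (0:ℝ)..1, |∫ x, betaKernel t b x ∂f3Measure - 2 * t| ^ p := by
  have hbias : EqOn (fun t => |∫ x, betaKernel t b x ∂f3Measure - 2 * t| ^ p)
      (fun t => |2 * b / (1 + 2 * b)| ^ p * |1 - 2 * t| ^ p) (uIcc 0 1) := fun t ht => by
    rw [uIcc_of_le zero_le_one] at ht
    simp only [integral_betaKernel_f3Measure_sub ht hb, abs_mul]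
    exact Real.mul_rpow (abs_nonneg _) (abs_nonneg _)
  have hb_le : b ≤ |2 * b / (1 + 2 * b)| := by
    rw [abs_of_pos (by positivity), le_div_iff₀ (by positivity)]
    nlinarith
  rw [intervalIntegral.integral_congr hbias, intervalIntegral.integral_const_mul,
    integral_abs_one_sub_two_mul_rpow hp, mul_one_div]
  gcongr

section JensenFubini

variable {Ω : Type*} [MeasurableSpace Ω] {μ : Measure Ω} [IsProbabilityMeasure μ] {p : ℝ}

lemma abs_integral_rpow_le_integral_abs_rpow (hp : 1 ≤ p) {f : Ω → ℝ} (hf : Integrable f μ)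
    (hfp : Integrable (fun ω => |f ω| ^ p) μ) : |∫ ω, f ω ∂μ| ^ p ≤ ∫ ω, |f ω| ^ p ∂μ :=
  calc |∫ ω, f ω ∂μ| ^ p ≤ (∫ ω, |f ω| ∂μ) ^ p := by
        gcongr
        exact abs_integral_le_integral_abs
    _ ≤ ∫ ω, |f ω| ^ p ∂μ :=
        (convexOn_rpow hp).map_integral_le (Real.continuous_rpow_const (by linarith)).continuousOn
          isClosed_Ici (Filter.Eventually.of_forall fun ω => abs_nonneg (f ω)) hf.abs hfp

lemma integral_rpow_abs_integral_le_integral_integral {T : Type*} [MeasurableSpace T]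
    {ν : Measure T} [IsFiniteMeasure ν] (hp : 1 ≤ p) {F : Ω → T → ℝ} (hF : Measurable (Function.uncurry F))
    {M : ℝ} (hFM : ∀ᵐ ω ∂μ, ∀ᵐ t ∂ν, |F ω t| ≤ M) :
    ∫ t, |∫ ω, F ω t ∂μ| ^ p ∂ν ≤ ∫ ω, ∫ t, |F ω t| ^ p ∂ν ∂μ := by
  have hp0 : 0 ≤ p := by linarith
  have hFp : Measurable fun z : Ω × T => |F z.1 z.2| ^ p := by
    have : Measurable fun z : Ω × T => F z.1 z.2 := hF
    fun_prop
  have hset : MeasurableSet {z : Ω × T | |F z.1 z.2| ≤ M} :=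
    measurableSet_le hF.abs measurable_const
  have hrpow_le {y : ℝ} (hy : |y| ≤ M) : ‖|y| ^ p‖ ≤ M ^ p := by
    rw [Real.norm_of_nonneg (by positivity)]
    exact Real.rpow_le_rpow (abs_nonneg y) hy hp0
  have hint : Integrable (fun z : Ω × T => |F z.1 z.2| ^ p) (μ.prod ν) :=
    Integrable.of_bound hFp.aestronglyMeasurable (M ^ p)
      (((Measure.ae_prod_iff_ae_ae hset).2 hFM).mono fun _ => hrpow_le)
  rw [integral_integral_swap hint]
  refine integral_mono_of_nonneg (Filter.Eventually.of_forall fun t => by positivity)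
    hint.integral_prod_right (((Measure.ae_ae_comm hset).1 hFM).mono fun t ht => ?_)
  exact abs_integral_rpow_le_integral_abs_rpow hp
    (Integrable.of_bound hF.of_uncurry_right.aestronglyMeasurable M ht)
    (Integrable.of_bound (hFp.comp (measurable_id.prodMk measurable_const)).aestronglyMeasurable
      (M ^ p) (ht.mono fun _ => hrpow_le))

end JensenFubini

lemma integral_inv_mul_sum_comp_of_map_eq {Ω α : Type*} [MeasurableSpace Ω] [MeasurableSpace α]
    {μ : Measure Ω} {n : ℕ} (hn : 0 < n) {X : Fin n → Ω → α} {P : Measure α}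
    (hX : ∀ i, AEMeasurable (X i) μ) (hXP : ∀ i, μ.map (X i) = P) {g : α → ℝ}
    (hg : AEStronglyMeasurable g P) (hgX : ∀ i, Integrable (fun ω => g (X i ω)) μ) :
    ∫ ω, (n : ℝ)⁻¹ * ∑ i, g (X i ω) ∂μ = ∫ x, g x ∂P := by
  have hterm (i : Fin n) : ∫ ω, g (X i ω) ∂μ = ∫ x, g x ∂P := by
    rw [← hXP i, integral_map (hX i) (hXP i ▸ hg)]
  rw [integral_const_mul, integral_finsetSum _ fun i _ => hgX i, Finset.sum_congr rfl
    fun i _ => hterm i, Finset.sum_const, Finset.card_fin, nsmul_eq_mul, inv_mul_cancel_left₀]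
  exact Nat.cast_ne_zero.2 hn.ne'

/-- The beta kernel density estimator `f̂_b(t)` of the sample `x`. -/
noncomputable def betaKDE {n : ℕ} (b : ℝ) (x : Fin n → ℝ) (t : ℝ) : ℝ :=
  (n : ℝ)⁻¹ * ∑ k, betaKernel t b (x k)

lemma measurable_betaKDE {n : ℕ} (b : ℝ) :
    Measurable fun z : (Fin n → ℝ) × ℝ => betaKDE b z.1 z.2 :=
  measurable_const.mul <| Finset.measurable_sum _ fun k _ =>
    (measurable_betaKernel b).comp
      (measurable_snd.prodMk ((measurable_pi_apply k).comp measurable_fst))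

lemma abs_betaKDE_sub_le {n : ℕ} {b t : ℝ} {x : Fin n → ℝ} (hb : 0 < b) (ht : t ∈ Icc (0:ℝ) 1)
    (hx : ∀ k, x k ∈ Icc (0:ℝ) 1) :
    |betaKDE b x t - 2 * t| ≤ (betaFn (b⁻¹ + 1) (b⁻¹ + 1))⁻¹ + 2 := by
  set B := (betaFn (b⁻¹ + 1) (b⁻¹ + 1))⁻¹
  have hK (k : Fin n) := betaKernel_mem_Icc ht hb (hx k)
  have hsum : ∑ k, betaKernel t b (x k) ≤ n * B := by
    simpa using Finset.sum_le_sum fun k (_ : k ∈ Finset.univ) => (hK k).2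
  have hB : 0 ≤ B := inv_nonneg.2 (betaFn_pos (by positivity) (by positivity)).le
  have hle : betaKDE b x t ≤ B := by
    calc betaKDE b x t ≤ (n : ℝ)⁻¹ * (n * B) := mul_le_mul_of_nonneg_left hsum (by positivity)
      _ ≤ B := by
        rcases n.eq_zero_or_pos with rfl | hn
        · simpa using hB
        · rw [inv_mul_cancel_left₀ (by positivity)]
  have hnonneg : 0 ≤ betaKDE b x t :=
    mul_nonneg (by positivity) (Finset.sum_nonneg fun k _ => (hK k).1)
  rw [abs_le]
  constructor <;> linarith [ht.1, ht.2]

lemma integral_rpow_abs_bias_le_integral_betaKDE {p b : ℝ} (hp : 1 ≤ p) (hb : 0 < b) {n : ℕ}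
    (hn : 0 < n) {Ω : Type*} [MeasurableSpace Ω] {μ : Measure Ω} [IsProbabilityMeasure μ]
    {X : Fin n → Ω → ℝ} (hX : ∀ i, Measurable (X i)) (hXf3 : ∀ i, μ.map (X i) = f3Measure) :
    ∫ t in (0:ℝ)..1, |∫ x, betaKernel t b x ∂f3Measure - 2 * t| ^ p ≤
      ∫ ω, (∫ t in (0:ℝ)..1, |betaKDE b (fun k => X k ω) t - 2 * t| ^ p) ∂μ := by
  have hXae : ∀ᵐ ω ∂μ, ∀ k, X k ω ∈ Icc (0:ℝ) 1 := ae_all_iff.2 fun k =>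
    (ae_map_iff (hX k).aemeasurable measurableSet_Icc).1 (hXf3 k ▸ ae_mem_Icc_f3Measure)
  have hmean (t : ℝ) (ht : t ∈ Icc (0:ℝ) 1) :
      ∫ ω, (betaKDE b (fun k => X k ω) t - 2 * t) ∂μ =
        ∫ x, betaKernel t b x ∂f3Measure - 2 * t := by
    have hK : Measurable (betaKernel t b) :=
      (measurable_betaKernel b).comp (measurable_const.prodMk measurable_id)
    have hKX (k : Fin n) : Integrable (fun ω => betaKernel t b (X k ω)) μ :=
      Integrable.of_bound (hK.comp (hX k)).aestronglyMeasurable (betaFn (b⁻¹ + 1) (b⁻¹ + 1))⁻¹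
        (hXae.mono fun ω hω => by
          rw [Real.norm_of_nonneg (betaKernel_mem_Icc ht hb (hω k)).1]
          exact (betaKernel_mem_Icc ht hb (hω k)).2)
    unfold betaKDE
    rw [integral_sub ((integrable_finsetSum _ fun k _ => hKX k).const_mul _) (integrable_const _),
      integral_const, probReal_univ, one_smul]
    exact congrArg (· - 2 * t) (integral_inv_mul_sum_comp_of_map_eq hn
      (fun k => (hX k).aemeasurable) hXf3 hK.aestronglyMeasurable hKX)
  have hF : Measurable (Function.uncurry fun ω t => betaKDE b (fun k => X k ω) t - 2 * t) :=
    ((measurable_betaKDE b).comp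
      ((measurable_pi_lambda _ fun k => (hX k).comp measurable_fst).prodMk measurable_snd)).sub
      (measurable_const.mul measurable_snd)
  have hbound : ∀ᵐ ω ∂μ, ∀ᵐ t ∂volume.restrict (Ioc (0:ℝ) 1),
      |betaKDE b (fun k => X k ω) t - 2 * t| ≤ (betaFn (b⁻¹ + 1) (b⁻¹ + 1))⁻¹ + 2 :=
    hXae.mono fun ω hω => ae_restrict_of_forall_mem measurableSet_Ioc fun t ht =>
      abs_betaKDE_sub_le hb (Ioc_subset_Icc_self ht) hω
  simp only [intervalIntegral.integral_of_le zero_le_one]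
  calc ∫ t in Ioc 0 1, |∫ x, betaKernel t b x ∂f3Measure - 2 * t| ^ p
      = ∫ t in Ioc 0 1, |∫ ω, (betaKDE b (fun k => X k ω) t - 2 * t) ∂μ| ^ p :=
        setIntegral_congr_fun measurableSet_Ioc fun t ht => by rw [hmean t (Ioc_subset_Icc_self ht)]
    _ ≤ _ := integral_rpow_abs_integral_le_integral_integral hp hF hbound

theorem bias_lower_bound_f3 (p : ℝ) (hp : 1 ≤ p) :
    ∃ C > (0:ℝ), ∃ b₀ ∈ Ioo (0:ℝ) 1, ∀ b ∈ Ioo (0:ℝ) b₀,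
      (∫ t in (0:ℝ)..1, |(∫ x, betaKernel t b x ∂f3Measure) - 2 * t| ^ p) ≥ C * b ^ p ∧
      (2 ≤ p → ∀ (n : ℕ), 0 < n → ∀ (Ω : Type) [MeasurableSpace Ω] (μ : Measure Ω),
        IsProbabilityMeasure μ → ∀ X : Fin n → Ω → ℝ,
          (∀ i, Measurable (X i)) →
          iIndepFun X μ →
          (∀ i, μ.map (X i) = f3Measure) →
          (∫ ω, (∫ t in (0:ℝ)..1,
              |(n:ℝ)⁻¹ * (∑ k, betaKernel t b (X k ω)) - 2 * t| ^ p) ∂μ) ≥ C * b ^ p) := by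
  refine ⟨1 / (p + 1), by positivity, 1 / 2, ⟨by norm_num, by norm_num⟩, fun b hb => ?_⟩
  have hbias : 1 / (p + 1) * b ^ p ≤
      ∫ t in (0:ℝ)..1, |∫ x, betaKernel t b x ∂f3Measure - 2 * t| ^ p := by
    rw [one_div_mul_eq_div]
    exact le_integral_rpow_abs_bias_betaKernel (by linarith) hb.1 hb.2.le
  refine ⟨hbias, fun _ n hn Ω _ μ _ X hX _ hXf3 => ?_⟩
  exact hbias.trans (integral_rpow_abs_bias_le_integral_betaKDE hp hb.1 hn hX hXf3)
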